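/- Let I, J, K be disjoint index sets and C = (C_{k,l})_{k,l ∈ I⊔J⊔K} a matrix of complex numbers. Then there is exactly one free-free-Boolean central limit distribution Γ_C : ℂ⟨Z_k : k ∈ I⊔J⊔K⟩ → ℂ with Γ_C(Z_k Z_l) = C_{k,l} for all k, l ∈ I⊔J⊔K. -/

import Mathlib

/-! The top cumulant of a word `Z_{ω(1)} ⋯ Z_{ω(n)}` is `Γ(Z_{ω(1)} ⋯ Z_{ω(n)})` (the term
`σ = 1ₙ`, with `μ(1ₙ, 1ₙ) = 1`) plus a combination of products of moments of the block subwords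
of the partitions `σ ≠ 1ₙ`, which are strictly shorter. Hence `Γ(1) = 1`, `Γ(Z_k Z_l) = C_{k,l}`
and the vanishing of the cumulants of order `n ≠ 2` determine the moments of all words
recursively, which gives uniqueness; defining the moments by this recursion and extending them
linearly over the monomial basis of `ℂ⟨Z_k⟩` gives existence. -/

namespace FFB

/-- The three letters ℓ, c, r labelling the faces. -/
inductive Letter : Type where
  | l | c | r
deriving DecidableEq

/-- `x` is one of the letters `ℓ`, `c`. -/
def isLC (x : Letter) : Prop := x = Letter.l ∨ x = Letter.c

variable {α : Type*}

/-- The total order `≺_χ` on the index set determined by `χ`: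
the elements of `χ⁻¹{ℓ,c}` in increasing order followed by the elements of
`χ⁻¹{r}` in decreasing order. -/
def chiLT [LT α] (χ : α → Letter) (i j : α) : Prop :=
  (isLC (χ i) ∧ isLC (χ j) ∧ i < j)
  ∨ (isLC (χ i) ∧ χ j = Letter.r)
  ∨ (χ i = Letter.r ∧ χ j = Letter.r ∧ j < i)

/-- A partition (equivalence relation) `π` is `χ`-noncrossing if there is no quadruple
`s₁ ≺_χ r₁ ≺_χ s₂ ≺_χ r₂` with `s₁ ∼ s₂`, `r₁ ∼ r₂` lying in different blocks. -/
def ChiNoncrossing [LT α] (χ : α → Letter) (π : Setoid α) : Prop :=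
  ∀ s₁ r₁ s₂ r₂ : α, chiLT χ s₁ r₁ → chiLT χ r₁ s₂ → chiLT χ s₂ r₂ →
    π s₁ s₂ → π r₁ r₂ → π s₁ r₁

/-- A partition `π` is `χ`-interval if whenever `i < j < k`, `i ∼ k` and `χ j = c`,
then `i, j, k` all lie in the same block. -/
def ChiInterval [LT α] (χ : α → Letter) (π : Setoid α) : Prop :=
  ∀ i j k : α, i < j → j < k → χ j = Letter.c → π i k → π i j

/-- The set of interval-bi-noncrossing partitions with respect to `χ`. -/
def IBNC [LT α] (χ : α → Letter) : Set (Setoid α) :=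
  {π | ChiNoncrossing χ π ∧ ChiInterval χ π}

/-- The set of `χ`-noncrossing partitions. -/
def NC [LT α] (χ : α → Letter) : Set (Setoid α) :=
  {π | ChiNoncrossing χ π}

/-- Restriction of a partition of `α` to a subset `V ⊆ α`. -/
def restrict (V : Set α) (σ : Setoid α) : Setoid V := Setoid.comap Subtype.val σ

/-- Restriction of `χ` to a subset `V ⊆ α`. -/
def restChi (V : Set α) (χ : α → Letter) : V → Letter := fun x => χ x.1

/- `mu` is the Möbius function of the finite poset `P` (with the induced order):
it is the (two-sided) convolution inverse of the zeta function. -/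
open Classical in
def IsMobius {β : Type*} [PartialOrder β] (P : Set β) (mu : β → β → ℂ) : Prop :=
  ∀ a ∈ P, ∀ b ∈ P, a ≤ b →
    ((∑ᶠ c ∈ {c | c ∈ P ∧ a ≤ c ∧ c ≤ b}, mu a c) = if a = b then 1 else 0) ∧
    ((∑ᶠ c ∈ {c | c ∈ P ∧ a ≤ c ∧ c ≤ b}, mu c b) = if a = b then 1 else 0)

section Moments

variable {A : Type*} [Ring A] [LinearOrder α] [Finite α]

/-- `φ_V(z₁,…,zₙ) = φ(z_{l₁} ⋯ z_{l_k})` where `V = {l₁ < ⋯ < l_k}`. -/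
noncomputable def phiV (φ : A → ℂ) (z : α → A) (V : Set α) : ℂ :=
  φ (((Set.toFinite V).toFinset.sort (· ≤ ·)).map z).prod

/-- `φ_σ(z₁,…,zₙ) = ∏_{V ∈ σ} φ_V(z₁,…,zₙ)`. -/
noncomputable def phiPart (φ : A → ℂ) (z : α → A) (σ : Setoid α) : ℂ :=
  ∏ᶠ q : Quotient σ, phiV φ z {y | Quotient.mk σ y = q}

/-- The free-free-Boolean cumulant
`κ_{χ,π}(z₁,…,zₙ) = Σ_{σ ∈ IBNC(χ), σ ≤ π} μ_{IBNC(χ)}(σ,π) φ_σ(z₁,…,zₙ)`,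
where `mu` is (a function which is) the Möbius function of `IBNC(χ)`. -/
noncomputable def cum (φ : A → ℂ) (χ : α → Letter)
    (mu : Setoid α → Setoid α → ℂ) (z : α → A) (π : Setoid α) : ℂ :=
  ∑ᶠ σ ∈ {σ | σ ∈ IBNC χ ∧ σ ≤ π}, mu σ π * phiPart φ z σ

end Moments

/-- Combinatorial free-free-Boolean independence: mixed cumulants vanish.
`F i x` is the face of the `i`-th triple labelled by the letter `x`. -/
def CombFFB {A : Type*} [Ring A] [Algebra ℂ A] (φ : A →ₗ[ℂ] ℂ) {I : Type*}
    (F : I → Letter → NonUnitalSubalgebra ℂ A) : Prop :=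
  ∀ (n : ℕ) (χ : Fin n → Letter) (ω : Fin n → I) (z : Fin n → A),
    (∀ k, z k ∈ F (ω k) (χ k)) → (¬ ∃ i, ∀ k, ω k = i) →
    ∀ mu : Setoid (Fin n) → Setoid (Fin n) → ℂ, IsMobius (IBNC χ) mu →
      cum (⇑φ) χ mu z ⊤ = 0

end FFB

namespace FFB

/-- The map `χ_ω` determined by a word `ω` in the disjoint union `I ⊔ J ⊔ K`; the disjoint
union of the three index sets is encoded as a type `S` together with a labelling
`lab : S → Letter` (`lab⁻¹(ℓ) = I`, `lab⁻¹(r) = J`, `lab⁻¹(c) = K`). -/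
def chiOf {S : Type*} (lab : S → Letter) {n : ℕ} (ω : Fin n → S) : Fin n → Letter :=
  fun k => lab (ω k)

/-- `Γ` is a free-free-Boolean central limit distribution on `ℂ⟨Z_k : k ∈ I ⊔ J ⊔ K⟩`:
it is a unital linear functional all of whose free-free-Boolean cumulants of order `n ≠ 2`
vanish. -/
def IsCLTDistribution {S : Type*} (lab : S → Letter)
    (Γ : FreeAlgebra ℂ S →ₗ[ℂ] ℂ) : Prop :=
  Γ 1 = 1 ∧
  ∀ (n : ℕ), 0 < n → n ≠ 2 → ∀ (ω : Fin n → S)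
    (mu : Setoid (Fin n) → Setoid (Fin n) → ℂ),
    IsMobius (IBNC (chiOf lab ω)) mu →
    cum (⇑Γ) (chiOf lab ω) mu (fun k => FreeAlgebra.ι ℂ (ω k)) ⊤ = 0

section Mobius

open Classical

variable {β : Type*} [PartialOrder β] {P : Set β} [LocallyFiniteOrder P]

theorem finsum_mem_interval_eq_sum_Icc (f : β → ℂ) (a b : P) :
    ∑ᶠ c ∈ {c | c ∈ P ∧ (a : β) ≤ c ∧ c ≤ b}, f c = ∑ c ∈ Finset.Icc a b, f c := by
  have himage : {c | c ∈ P ∧ (a : β) ≤ c ∧ c ≤ b} = Subtype.val '' Set.Icc a b := by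
    ext c
    constructor
    · rintro ⟨hc, hac, hcb⟩
      exact ⟨⟨c, hc⟩, ⟨hac, hcb⟩, rfl⟩
    · rintro ⟨c, ⟨hac, hcb⟩, rfl⟩
      exact ⟨c.2, hac, hcb⟩
  rw [himage, finsum_mem_image Subtype.val_injective.injOn, ← Finset.coe_Icc,
    finsum_mem_coe_finset]

variable (P) in
noncomputable def mobius (a b : β) : ℂ :=
  if h : a ∈ P ∧ b ∈ P then IncidenceAlgebra.mu ℂ (⟨a, h.1⟩ : P) ⟨b, h.2⟩ else 0

theorem mobius_coe (a b : P) : mobius P a b = IncidenceAlgebra.mu ℂ a b := by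
  simp [mobius]

theorem mobius_self {a : β} (ha : a ∈ P) : mobius P a a = 1 := by
  lift a to P using ha
  rw [mobius_coe, IncidenceAlgebra.mu_self]

theorem isMobius_mobius : IsMobius P (mobius P) := by
  intro a ha b hb _
  lift a to P using ha
  lift b to P using hb
  simp only [finsum_mem_interval_eq_sum_Icc, mobius_coe, Subtype.coe_inj]
  exact ⟨IncidenceAlgebra.sum_Icc_mu_right a b, IncidenceAlgebra.sum_Icc_mu_left a b⟩

/-- A left inverse of `ζ` in the incidence algebra is the Möbius function. -/
theorem IsMobius.eq_mobius {mu : β → β → ℂ} (h : IsMobius P mu) {a b : β} (ha : a ∈ P)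
    (hb : b ∈ P) (hab : a ≤ b) : mu a b = mobius P a b := by
  let f : IncidenceAlgebra ℂ P :=
    ⟨fun x y => if x ≤ y then mu x y else 0, fun x y hxy => if_neg hxy⟩
  have hf : f * IncidenceAlgebra.zeta ℂ = 1 := by
    refine IncidenceAlgebra.ext fun x y hxy => ?_
    have hsum := (h x x.2 y y.2 hxy).1
    rw [finsum_mem_interval_eq_sum_Icc] at hsum
    simp only [IncidenceAlgebra.mul_apply, IncidenceAlgebra.zeta_apply,
      IncidenceAlgebra.one_apply, Subtype.coe_inj] at hsum ⊢
    rw [← hsum]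
    refine Finset.sum_congr rfl fun c hc => ?_
    rw [Finset.mem_Icc] at hc
    simp [f, hc.1, hc.2]
  have hfmu : f = IncidenceAlgebra.mu ℂ := by
    rw [← one_mul (IncidenceAlgebra.mu ℂ), ← hf, mul_assoc, IncidenceAlgebra.zeta_mul_mu,
      mul_one]
  lift a to P using ha
  lift b to P using hb
  rw [mobius_coe, ← hfmu]
  exact (if_pos hab).symm

end Mobius

theorem top_mem_IBNC {α : Type*} [LT α] (χ : α → Letter) : (⊤ : Setoid α) ∈ IBNC χ :=
  ⟨fun _ _ _ _ _ _ _ _ _ => trivial, fun _ _ _ _ _ _ _ => trivial⟩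

instance {α : Type*} [Finite α] : Finite (Setoid α) :=
  Finite.of_injective (fun s : Setoid α => s.r) fun _ _ h =>
    Setoid.ext fun a b => iff_of_eq (congrFun₂ h a b)

noncomputable instance {α : Type*} [LT α] [Finite α] (χ : α → Letter) :
    LocallyFiniteOrder (IBNC χ) :=
  LocallyFiniteOrder.ofFiniteIcc fun _ _ => Set.toFinite _

section Cumulant

variable {α : Type*} [LinearOrder α] [Finite α]

theorem phiPart_top [Nonempty α] {A : Type*} [Ring A] (φ : A → ℂ) (z : α → A) :
    phiPart φ z ⊤ = phiV φ z Set.univ := by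
  have : Subsingleton (Quotient (⊤ : Setoid α)) :=
    ⟨Quotient.ind₂ fun _ _ => Quotient.sound trivial⟩
  have : Unique (Quotient (⊤ : Setoid α)) :=
    uniqueOfSubsingleton (Quotient.mk _ (Classical.arbitrary α))
  rw [phiPart, finprod_unique]
  congr 1
  exact Set.eq_univ_of_forall fun _ => Subsingleton.elim _ _

theorem cum_top_eq_add [Nonempty α] {A : Type*} [Ring A] (φ : A → ℂ) (χ : α → Letter)
    {mu : Setoid α → Setoid α → ℂ} (hmu : IsMobius (IBNC χ) mu) (z : α → A) :
    cum φ χ mu z ⊤ = phiV φ z Set.univ +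
      ∑ᶠ σ ∈ {σ | σ ∈ IBNC χ ∧ σ ≠ ⊤}, mobius (IBNC χ) σ ⊤ * phiPart φ z σ := by
  have hsplit : {σ | σ ∈ IBNC χ ∧ σ ≤ ⊤} = insert ⊤ {σ | σ ∈ IBNC χ ∧ σ ≠ ⊤} := by
    ext σ
    by_cases hσ : σ = ⊤ <;> simp [hσ, top_mem_IBNC]
  rw [cum, hsplit, finsum_mem_insert _ (fun h => h.2 rfl) (Set.toFinite _),
    hmu.eq_mobius (top_mem_IBNC χ) (top_mem_IBNC χ) le_rfl, mobius_self (top_mem_IBNC χ),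
    one_mul, phiPart_top]
  congr 1
  exact finsum_mem_congr rfl fun σ hσ => by rw [hmu.eq_mobius hσ.1 (top_mem_IBNC χ) le_top]

end Cumulant

section Moments

variable {S : Type*}

theorem apply_length_get_ofFn {β : Type*} (F : ∀ n, (Fin n → S) → β) {n : ℕ} (ω : Fin n → S) :
    F (List.ofFn ω).length (List.ofFn ω).get = F n ω :=
  congrArg (fun p : Σ n, Fin n → S => F p.1 p.2) (List.ofFn_inj'.mp (List.ofFn_get _))

noncomputable def blockWord {n : ℕ} (ω : Fin n → S) (V : Set (Fin n)) : List S :=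
  ((Set.toFinite V).toFinset.sort (· ≤ ·)).map ω

theorem blockWord_univ {n : ℕ} (ω : Fin n → S) : blockWord ω Set.univ = List.ofFn ω := by
  rw [blockWord, Set.toFinite_toFinset, Set.toFinset_univ, Fin.sort_univ, List.ofFn_eq_map]

theorem length_blockWord_lt {n : ℕ} {σ : Setoid (Fin n)} (hσ : σ ≠ ⊤) (ω : Fin n → S)
    (q : Quotient σ) : (blockWord ω {y | Quotient.mk σ y = q}).length < n := by
  have hproper : (Set.toFinite {y | Quotient.mk σ y = q}).toFinset ≠ Finset.univ := by
    intro h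
    apply hσ
    ext a b
    have ha : a ∈ (Set.toFinite {y | Quotient.mk σ y = q}).toFinset := h ▸ Finset.mem_univ a
    have hb : b ∈ (Set.toFinite {y | Quotient.mk σ y = q}).toFinset := h ▸ Finset.mem_univ b
    rw [Set.Finite.mem_toFinset, Set.mem_ofPred_eq] at ha hb
    exact iff_of_true (Quotient.exact (ha.trans hb.symm)) trivial
  rw [blockWord, List.length_map, Finset.length_sort]
  simpa using Finset.card_lt_card (Finset.ssubset_univ_iff.mpr hproper)

noncomputable def moment (lab : S → Letter) (C : S → S → ℂ) : List S → ℂ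
  | [] => 1
  | [k, l] => C k l
  | w => -∑ᶠ σ ∈ {σ | σ ∈ IBNC (chiOf lab w.get) ∧ σ ≠ ⊤},
      mobius (IBNC (chiOf lab w.get)) σ ⊤ *
        ∏ᶠ q : Quotient σ, moment lab C (blockWord w.get {y | Quotient.mk σ y = q})
termination_by w => w.length
decreasing_by
  rename_i hσ
  exact length_blockWord_lt hσ.2 w.get q

noncomputable def properPartSum (lab : S → Letter) (M : List S → ℂ) {n : ℕ}
    (ω : Fin n → S) : ℂ :=
  ∑ᶠ σ ∈ {σ | σ ∈ IBNC (chiOf lab ω) ∧ σ ≠ ⊤},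
    mobius (IBNC (chiOf lab ω)) σ ⊤ *
      ∏ᶠ q : Quotient σ, M (blockWord ω {y | Quotient.mk σ y = q})

theorem properPartSum_congr (lab : S → Letter) {M M' : List S → ℂ} {n : ℕ}
    (h : ∀ w : List S, w.length < n → M w = M' w) (ω : Fin n → S) :
    properPartSum lab M ω = properPartSum lab M' ω :=
  finsum_mem_congr rfl fun _ hσ => congrArg _ <|
    finprod_congr fun q => h _ (length_blockWord_lt hσ.2 ω q)

theorem moment_eq_neg_properPartSum (lab : S → Letter) (C : S → S → ℂ) {w : List S}
    (h0 : w.length ≠ 0) (h2 : w.length ≠ 2) :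
    moment lab C w = -properPartSum lab (moment lab C) w.get := by
  rw [moment.eq_3]
  · rfl
  · rintro rfl
    exact h0 rfl
  · rintro k l rfl
    exact h2 rfl

theorem moment_ofFn (lab : S → Letter) (C : S → S → ℂ) {n : ℕ} (h0 : n ≠ 0) (h2 : n ≠ 2)
    (ω : Fin n → S) : moment lab C (List.ofFn ω) = -properPartSum lab (moment lab C) ω := by
  rw [moment_eq_neg_properPartSum lab C (by simpa using h0) (by simpa using h2),
    apply_length_get_ofFn (fun _ ω => properPartSum lab (moment lab C) ω)]

end Moments

section Functionals

variable {S : Type*}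

theorem _root_.FreeAlgebra.basisFreeMonoid_apply (R : Type*) [CommSemiring R]
    (w : FreeMonoid S) :
    FreeAlgebra.basisFreeMonoid R S w = (w.toList.map (FreeAlgebra.ι R)).prod := by
  simp [FreeAlgebra.basisFreeMonoid, FreeAlgebra.equivMonoidAlgebraFreeMonoid,
    FreeMonoid.lift_apply]

noncomputable def wordFunctional (M : List S → ℂ) : FreeAlgebra ℂ S →ₗ[ℂ] ℂ :=
  (FreeAlgebra.basisFreeMonoid ℂ S).constr ℂ fun w => M w.toList

theorem wordFunctional_apply_prod (M : List S → ℂ) (w : List S) :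
    wordFunctional M (w.map (FreeAlgebra.ι ℂ)).prod = M w := by
  rw [wordFunctional, ← FreeMonoid.toList_ofList w, ← FreeAlgebra.basisFreeMonoid_apply,
    Module.Basis.constr_basis]

theorem eq_wordFunctional {Γ : FreeAlgebra ℂ S →ₗ[ℂ] ℂ} {M : List S → ℂ}
    (h : ∀ w : List S, Γ (w.map (FreeAlgebra.ι ℂ)).prod = M w) : Γ = wordFunctional M :=
  (FreeAlgebra.basisFreeMonoid ℂ S).ext fun w => by
    rw [FreeAlgebra.basisFreeMonoid_apply, h, wordFunctional_apply_prod]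

theorem phiV_ι_eq {n : ℕ} (φ : FreeAlgebra ℂ S → ℂ) (ω : Fin n → S) (V : Set (Fin n)) :
    phiV φ (fun k => FreeAlgebra.ι ℂ (ω k)) V =
      φ ((blockWord ω V).map (FreeAlgebra.ι ℂ)).prod := by
  rw [phiV, blockWord, List.map_map]
  rfl

theorem cum_ι_eq_add {n : ℕ} (hn : 0 < n) (lab : S → Letter) (Γ : FreeAlgebra ℂ S → ℂ)
    (ω : Fin n → S) {mu : Setoid (Fin n) → Setoid (Fin n) → ℂ}
    (hmu : IsMobius (IBNC (chiOf lab ω)) mu) :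
    cum Γ (chiOf lab ω) mu (fun k => FreeAlgebra.ι ℂ (ω k)) ⊤ =
      Γ ((List.ofFn ω).map (FreeAlgebra.ι ℂ)).prod +
        properPartSum lab (fun w => Γ (w.map (FreeAlgebra.ι ℂ)).prod) ω := by
  have : Nonempty (Fin n) := ⟨⟨0, hn⟩⟩
  rw [cum_top_eq_add _ _ hmu, phiV_ι_eq, blockWord_univ, properPartSum]
  simp only [phiPart, phiV_ι_eq]

theorem IsCLTDistribution.apply_prod_eq_moment {lab : S → Letter} {C : S → S → ℂ}
    {Γ : FreeAlgebra ℂ S →ₗ[ℂ] ℂ} (hΓ : IsCLTDistribution lab Γ)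
    (hC : ∀ k l : S, Γ (FreeAlgebra.ι ℂ k * FreeAlgebra.ι ℂ l) = C k l) (w : List S) :
    Γ (w.map (FreeAlgebra.ι ℂ)).prod = moment lab C w := by
  induction hn : w.length using Nat.strong_induction_on generalizing w with
  | _ n ih =>
    by_cases h0 : n = 0
    · rw [List.length_eq_zero_iff.mp (hn.trans h0)]
      simpa [moment] using hΓ.1
    by_cases h2 : n = 2
    · obtain ⟨k, l, rfl⟩ := List.length_eq_two.mp (hn.trans h2)
      simpa [moment] using hC k l
    have hcum := hΓ.2 _ (by omega) (by omega) w.get _ isMobius_mobius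
    rw [cum_ι_eq_add (by omega) lab Γ w.get isMobius_mobius, List.ofFn_get,
      properPartSum_congr lab (fun v hv => ih v.length (hn ▸ hv) v rfl)] at hcum
    rw [moment_eq_neg_properPartSum lab C (hn ▸ h0) (hn ▸ h2)]
    exact eq_neg_of_add_eq_zero_left hcum

theorem isCLTDistribution_wordFunctional_moment (lab : S → Letter) (C : S → S → ℂ) :
    IsCLTDistribution lab (wordFunctional (moment lab C)) := by
  refine ⟨by simpa [moment] using wordFunctional_apply_prod (moment lab C) [], ?_⟩
  intro n hn h2 ω mu hmu
  have hM : (fun w => wordFunctional (moment lab C) (w.map (FreeAlgebra.ι ℂ)).prod) =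
      moment lab C := funext (wordFunctional_apply_prod _)
  rw [cum_ι_eq_add hn lab _ ω hmu, hM, wordFunctional_apply_prod, moment_ofFn lab C hn.ne' h2,
    neg_add_cancel]

end Functionals

/-- For every matrix `C = (C_{k,l})` of complex numbers there is exactly
one free-free-Boolean central limit distribution `Γ_C` on `ℂ⟨Z_k : k ∈ I ⊔ J ⊔ K⟩` with
`Γ_C(Z_k Z_l) = C_{k,l}` for all `k, l`. -/
theorem existsUnique_CLT_distribution {S : Type*} (lab : S → Letter) (C : S → S → ℂ) :
    ∃! Γ : FreeAlgebra ℂ S →ₗ[ℂ] ℂ,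
      IsCLTDistribution lab Γ ∧
      ∀ k l : S, Γ (FreeAlgebra.ι ℂ k * FreeAlgebra.ι ℂ l) = C k l := by
  refine ⟨wordFunctional (moment lab C),
    ⟨isCLTDistribution_wordFunctional_moment lab C, fun k l => ?_⟩, ?_⟩
  · simpa [moment] using wordFunctional_apply_prod (moment lab C) [k, l]
  · rintro Γ ⟨hΓ, hC⟩
    exact eq_wordFunctional (hΓ.apply_prod_eq_moment hC)

end FFB
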